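/- Let K and L be colored regularity graphs and let K ∨ L be the CRG formed by taking their disjoint union and joining all pairs of vertices from K to L by gray edges. Then for every p ∈ (0,1), 1/g_{K∨L}(p) = 1/g_K(p) + 1/g_L(p), where g is defined as the minimum of the quadratic form ⟨μ, M(p)μ⟩ over probability vectors μ. -/

import Mathlib

open Finset

inductive EColor | white | black | gray
deriving DecidableEq

/-- The `p`-weight of an edge color: `p` for white, `1-p` for black, `0` for gray. -/
def wval (p : ℝ) : EColor → ℝ
  | .white => p
  | .black => 1 - p
  | .gray => 0

/-- The matrix `M_K(p)` of a CRG given by vertex colors `vb` (`true` = black)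
and edge colors `ec`. -/
def Mmat {V : Type*} [DecidableEq V] (vb : V → Bool) (ec : V → V → EColor) (p : ℝ)
    (x y : V) : ℝ :=
  if x = y then (if vb x then 1 - p else p) else wval p (ec x y)

/-- `μ` is a probability mass. -/
def IsProb {V : Type*} [Fintype V] (μ : V → ℝ) : Prop :=
  (∀ x, 0 ≤ μ x) ∧ ∑ x, μ x = 1

/-- The quadratic form `⟨μ, M_K(p) μ⟩`. -/
def QF {V : Type*} [Fintype V] [DecidableEq V] (vb : V → Bool) (ec : V → V → EColor)
    (p : ℝ) (μ : V → ℝ) : ℝ :=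
  ∑ x, ∑ y, μ x * Mmat vb ec p x y * μ y

/-- `g` is the minimum of the quadratic form over probability masses, i.e. `g = g_K(p)`. -/
def gIs {V : Type*} [Fintype V] [DecidableEq V] (vb : V → Bool) (ec : V → V → EColor)
    (p g : ℝ) : Prop :=
  IsLeast {t | ∃ μ : V → ℝ, IsProb μ ∧ t = QF vb ec p μ} g

/-- The weighted gray-degree `d_G(u) = ∑_{v : uv gray} μ(v)`. -/
def grayDeg {V : Type*} [Fintype V] [DecidableEq V] (ec : V → V → EColor) (μ : V → ℝ)
    (u : V) : ℝ :=
  ∑ v ∈ Finset.univ.filter (fun v => v ≠ u ∧ ec u v = EColor.gray), μ v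

/-- The edge-coloring of the gray join `K ∨ L`. -/
def joinEC {V W : Type*} (ecK : V → V → EColor) (ecL : W → W → EColor) :
    V ⊕ W → V ⊕ W → EColor
  | .inl a, .inl b => ecK a b
  | .inr a, .inr b => ecL a b
  | _, _ => .gray


/-!
On the gray join the quadratic form splits as `Q_K(μ|_K) + Q_L(μ|_L)`, and by homogeneity
`Q_K(ν) ≥ (∑ ν)² g_K` for every nonnegative `ν`. Hence `g_{K∨L}` is the minimum of
`s² g_K + t² g_L` over `s + t = 1`, `s, t ≥ 0`, which is `g_K g_L / (g_K + g_L)`, attained at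
`s = g_L / (g_K + g_L)`.
-/

section QuadraticForm

variable {V : Type*} [Fintype V] [DecidableEq V] (vb : V → Bool) (ec : V → V → EColor) (p : ℝ)

lemma QF_const_mul (c : ℝ) (μ : V → ℝ) :
    QF vb ec p (fun x => c * μ x) = c ^ 2 * QF vb ec p μ := by
  simp only [QF, Finset.mul_sum]
  exact Finset.sum_congr rfl fun x _ => Finset.sum_congr rfl fun y _ => by ring

lemma sq_sum_mul_le_QF {g : ℝ} (hg : gIs vb ec p g) {μ : V → ℝ} (hμ : ∀ x, 0 ≤ μ x) :
    (∑ x, μ x) ^ 2 * g ≤ QF vb ec p μ := by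
  set s := ∑ x, μ x
  have hs0 : 0 ≤ s := Finset.sum_nonneg fun x _ => hμ x
  rcases hs0.eq_or_lt with hs | hs
  · have hμ0 : μ = 0 := funext fun x =>
      (Finset.sum_eq_zero_iff_of_nonneg fun x _ => hμ x).1 hs.symm x (Finset.mem_univ x)
    simp [← hs, hμ0, QF]
  · have hν : IsProb (fun x => s⁻¹ * μ x) :=
      ⟨fun x => mul_nonneg (inv_nonneg.2 hs.le) (hμ x),
        by rw [← Finset.mul_sum, inv_mul_cancel₀ hs.ne']⟩
    have hle : g ≤ s⁻¹ ^ 2 * QF vb ec p μ := QF_const_mul vb ec p s⁻¹ μ ▸ hg.2 ⟨_, hν, rfl⟩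
    calc s ^ 2 * g ≤ s ^ 2 * (s⁻¹ ^ 2 * QF vb ec p μ) := by gcongr
      _ = QF vb ec p μ := by field_simp

end QuadraticForm

lemma QF_joinEC {V W : Type*} [Fintype V] [DecidableEq V] [Fintype W] [DecidableEq W]
    (vbK : V → Bool) (ecK : V → V → EColor) (vbL : W → Bool) (ecL : W → W → EColor)
    (p : ℝ) (μ : V ⊕ W → ℝ) :
    QF (Sum.elim vbK vbL) (joinEC ecK ecL) p μ
      = QF vbK ecK p (fun x => μ (.inl x)) + QF vbL ecL p (fun y => μ (.inr y)) := by
  simp [QF, Fintype.sum_sum_type, Mmat, joinEC, wval, Finset.sum_add_distrib]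
  rfl

lemma mul_div_add_le_sq_mul_add_sq_mul {a b s t : ℝ} (ha : 0 < a) (hb : 0 < b)
    (hst : s + t = 1) : a * b / (a + b) ≤ s ^ 2 * a + t ^ 2 * b := by
  rw [div_le_iff₀ (by positivity)]
  -- `(s²a + t²b)(a + b) - ab(s + t)² = (sa - tb)²`
  have : a * b = a * b * (s + t) ^ 2 := by rw [hst]; ring
  nlinarith [sq_nonneg (s * a - t * b)]

lemma gIs_joinEC {V W : Type*} [Fintype V] [DecidableEq V] [Fintype W] [DecidableEq W]
    {vbK : V → Bool} {ecK : V → V → EColor} {vbL : W → Bool} {ecL : W → W → EColor}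
    {p gK gL : ℝ} (hgK : gIs vbK ecK p gK) (hgL : gIs vbL ecL p gL)
    (hKpos : 0 < gK) (hLpos : 0 < gL) :
    gIs (Sum.elim vbK vbL) (joinEC ecK ecL) p (gK * gL / (gK + gL)) := by
  have hsum : 0 < gK + gL := by positivity
  constructor
  · obtain ⟨μK, hμK, hQK⟩ := hgK.1
    obtain ⟨μL, hμL, hQL⟩ := hgL.1
    set a := gL / (gK + gL)
    set b := gK / (gK + gL)
    refine ⟨Sum.elim (fun x => a * μK x) (fun y => b * μL y), ⟨?_, ?_⟩, ?_⟩
    · rintro (x | y)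
      · exact mul_nonneg (by positivity) (hμK.1 x)
      · exact mul_nonneg (by positivity) (hμL.1 y)
    · simp only [Fintype.sum_sum_type, Sum.elim_inl, Sum.elim_inr, ← Finset.mul_sum,
        hμK.2, hμL.2, a, b]
      field_simp
      ring
    · rw [QF_joinEC]
      simp only [Sum.elim_inl, Sum.elim_inr, QF_const_mul, ← hQK, ← hQL, a, b]
      field_simp
      ring
  · rintro _ ⟨μ, hμ, rfl⟩
    have hK := sq_sum_mul_le_QF vbK ecK p hgK fun x => hμ.1 (.inl x)
    have hL := sq_sum_mul_le_QF vbL ecL p hgL fun y => hμ.1 (.inr y)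
    have hst : ∑ x, μ (.inl x) + ∑ y, μ (.inr y) = 1 := by
      rw [← Fintype.sum_sum_type]; exact hμ.2
    rw [QF_joinEC]
    linarith [mul_div_add_le_sq_mul_add_sq_mul hKpos hLpos hst]

theorem stmt1_general {V W : Type*} [Fintype V] [DecidableEq V] [Fintype W] [DecidableEq W]
    (vbK : V → Bool) (ecK : V → V → EColor) (vbL : W → Bool) (ecL : W → W → EColor)
    (p gK gL gJ : ℝ)
    (hgK : gIs vbK ecK p gK) (hgL : gIs vbL ecL p gL)
    (hKpos : 0 < gK) (hLpos : 0 < gL)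
    (hgJ : gIs (Sum.elim vbK vbL) (joinEC ecK ecL) p gJ) :
    1 / gJ = 1 / gK + 1 / gL := by
  rw [hgJ.unique (gIs_joinEC hgK hgL hKpos hLpos)]
  field_simp
  ring

/-- for the gray join `K ∨ L`, `1/g_{K∨L}(p) = 1/g_K(p) + 1/g_L(p)`. -/
theorem stmt1 {V W : Type*} [Fintype V] [DecidableEq V] [Fintype W] [DecidableEq W]
    (vbK : V → Bool) (ecK : V → V → EColor) (vbL : W → Bool) (ecL : W → W → EColor)
    (p gK gL gJ : ℝ) (hp0 : 0 < p) (hp1 : p < 1)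
    (hgK : gIs vbK ecK p gK) (hgL : gIs vbL ecL p gL)
    (hKpos : 0 < gK) (hLpos : 0 < gL)
    (hgJ : gIs (Sum.elim vbK vbL) (joinEC ecK ecL) p gJ) :
    1 / gJ = 1 / gK + 1 / gL :=
  stmt1_general vbK ecK vbL ecL p gK gL gJ hgK hgL hKpos hLpos hgJ
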